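/- (Soundness of matrix interpretations.) Let m ≥ 1, ε > 0, and for vectors define x ≫_ε y iff x_1 ≥ ε + y_1 and x_i ≥ y_i for i = 2,…,m. Let 𝒜 be an F-algebra on (ℝ≥0)^m such that every f_𝒜 is of the form f_𝒜(x⃗_1,…,x⃗_n) = Σ_{i=1}^n C_i · x⃗_i + c⃗ with C_i ∈ (ℝ≥0)^{m×m} and c⃗ ∈ (ℝ≥0)^m, and such that every f_𝒜 is monotone with respect to ≫_ε in each argument. Let R be a PTRS over T(F,V) such that ⟦l⟧_α ≫_ε E(⟦d⟧_α) for every rule l → d ∈ R and every assignment α : V → (ℝ≥0)^m, where E(⟦d⟧_α) = Σ_t d(t)·⟦t⟧_α (componentwise). Then R is strongly almost surely terminating. -/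

import Mathlib

open scoped NNReal ENNReal

/-- A finite (probability) distribution on `A`: a finitely supported weight
function with total weight `1`. -/
structure FinDist (A : Type*) where
  w : A →₀ ℝ≥0
  sum_one : w.sum (fun _ p => p) = 1

/-- Multidistributions on `A`: finite multisets of weighted elements `p:a`. -/
abbrev MD (A : Type*) := Multiset (ℝ≥0 × A)

namespace MD

/-- The total weight `|μ|` of a multidistribution. -/
def wt {A : Type*} (μ : MD A) : ℝ≥0 := (μ.map Prod.fst).sum

/-- Scalar multiplication `p·μ`. -/
def smul {A : Type*} (p : ℝ≥0) (μ : MD A) : MD A :=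
  μ.map fun qa => (p * qa.1, qa.2)

/-- The expected value `E(f(μ)) = Σ_{p:a ∈ μ} p·f(a)`. -/
def exp {A : Type*} (f : A → ℝ≥0) (μ : MD A) : ℝ≥0 :=
  (μ.map fun pa => pa.1 * f pa.2).sum

end MD

namespace FinDist

/-- The multidistribution associated with a finite distribution. -/
def toMD {A : Type*} (d : FinDist A) : MD A :=
  d.w.support.val.map fun a => (d.w a, a)

/-- The expected value `E(f(d)) = Σ_a d(a)·f(a)`. -/
def exp {A : Type*} (f : A → ℝ≥0) (d : FinDist A) : ℝ≥0 :=
  d.w.sum fun a p => p * f a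

/-- Pushforward of a finite distribution along a map; this is
`overline(h(d))`, the collapse of the elementwise image of `d`. -/
noncomputable def map {A B : Type*} (h : A → B) (d : FinDist A) : FinDist B :=
  ⟨Finsupp.mapDomain h d.w, by
    rw [Finsupp.sum_mapDomain_index (fun _ => rfl) (fun _ _ _ => rfl)]
    exact d.sum_one⟩

/-- The Dirac distribution. -/
noncomputable def dirac {A : Type*} (a : A) : FinDist A :=
  ⟨Finsupp.single a 1, by simp⟩

end FinDist

/-- A PARS over `A`: a set of probabilistic reductions `a → d`. -/
abbrev PARS (A : Type*) := A → FinDist A → Prop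

/-- `a` is terminal (a normal form) if it has no reduction. -/
def PARS.Terminal {A : Type*} (P : PARS A) (a : A) : Prop := ∀ d, ¬ P a d

/-- The probabilistic reduction relation `⇒_P` on multidistributions. -/
inductive PARS.Step {A : Type*} (P : PARS A) : MD A → MD A → Prop
  | term (a : A) : P.Terminal a → PARS.Step P {(1, a)} 0
  | rule (a : A) (d : FinDist A) : P a d → PARS.Step P {(1, a)} d.toMD
  | conv (n : ℕ) (p : Fin n → ℝ≥0) (μ ρ : Fin n → MD A) :
      (∑ i, p i) ≤ 1 → (∀ i, PARS.Step P (μ i) (ρ i)) →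
      PARS.Step P (∑ i, MD.smul (p i) (μ i)) (∑ i, MD.smul (p i) (ρ i))

/-- An (infinite) reduction sequence of `P`. -/
def PARS.RedSeq {A : Type*} (P : PARS A) (μs : ℕ → MD A) : Prop :=
  ∀ n, P.Step (μs n) (μs (n + 1))

/-- A reduction sequence of `P` starting from `μ`. -/
def PARS.RedSeqFrom {A : Type*} (P : PARS A) (μ : MD A) (μs : ℕ → MD A) : Prop :=
  μs 0 = μ ∧ P.RedSeq μs

/-- The expected derivation length `adl(⃗μ) = Σ_{n ≥ 1} |μ_n|`. -/
noncomputable def adl {A : Type*} (μs : ℕ → MD A) : ℝ≥0∞ :=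
  ∑' n : ℕ, (MD.wt (μs (n + 1)) : ℝ≥0∞)

/-- The expected derivation height `adh_P(a)`. -/
noncomputable def adh {A : Type*} (P : PARS A) (a : A) : ℝ≥0∞ :=
  ⨆ (μs : ℕ → MD A) (_ : P.RedSeqFrom {(1, a)} μs), adl μs

/-- Strong almost sure termination. -/
def PARS.SAST {A : Type*} (P : PARS A) : Prop := ∀ a, adh P a < ⊤

/-- Almost sure termination. -/
def PARS.AST {A : Type*} (P : PARS A) : Prop :=
  ∀ μs : ℕ → MD A, P.RedSeq μs →
    Filter.Tendsto (fun n => MD.wt (μs n)) Filter.atTop (nhds 0)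

/-- `f` is a (probabilistic) ranking function for `P` with parameter `ε`. -/
def PARS.Ranking {A : Type*} (P : PARS A) (ε : ℝ≥0) (f : A → ℝ≥0) : Prop :=
  ∀ a d, P a d → f a ≥ ε + FinDist.exp f d
/-- First-order terms over signature `F` (with arities `ar`) and variables `V`. -/
inductive Tm (F : Type*) (ar : F → ℕ) (V : Type*) : Type _ where
  | var : V → Tm F ar V
  | app : (f : F) → (Fin (ar f) → Tm F ar V) → Tm F ar V

namespace Tm

/-- Homomorphic extension of a substitution to terms. -/
def subst {F V : Type*} {ar : F → ℕ} (σ : V → Tm F ar V) : Tm F ar V → Tm F ar V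
  | .var x => σ x
  | .app f ts => .app f (fun i => subst σ (ts i))

end Tm

/-- A (pre)context: a term with variables `V ⊕ Unit`, where `Sum.inr ()` is the hole `□`. -/
abbrev Ctx (F : Type*) (ar : F → ℕ) (V : Type*) := Tm F ar (V ⊕ Unit)

/-- Number of occurrences of the hole `□` in a precontext. -/
def Ctx.holes {F V : Type*} {ar : F → ℕ} : Ctx F ar V → ℕ
  | .var (.inl _) => 0
  | .var (.inr _) => 1
  | .app _ ts => ∑ i, Ctx.holes (ts i)

/-- A context has exactly one occurrence of the hole. -/
def Ctx.IsCtx {F V : Type*} {ar : F → ℕ} (C : Ctx F ar V) : Prop := C.holes = 1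

/-- `C[t]`: plugging a term into (the holes of) a precontext. -/
def Ctx.plug {F V : Type*} {ar : F → ℕ} (C : Ctx F ar V) (t : Tm F ar V) : Tm F ar V :=
  match C with
  | .var (.inl x) => .var x
  | .var (.inr _) => t
  | .app f ts => .app f (fun i => Ctx.plug (ts i) t)

/-- An `F`-algebra on carrier `X`. -/
structure Alg (F : Type*) (ar : F → ℕ) (X : Type*) where
  I : (f : F) → (Fin (ar f) → X) → X

/-- The interpretation `⟦t⟧_α` of a term under assignment `α`. -/
def Alg.interp {F V X : Type*} {ar : F → ℕ} (A : Alg F ar X) (α : V → X) :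
    Tm F ar V → X
  | .var x => α x
  | .app f ts => A.I f (fun i => A.interp α (ts i))

/-- The term algebra `𝒯` on `T(F,V)`. -/
def termAlg (F : Type*) (ar : F → ℕ) (V : Type*) : Alg F ar (Tm F ar V) :=
  ⟨fun f ts => Tm.app f ts⟩

/-- `(𝒜, ⊐)` is a probabilistic monotone `F`-algebra: each interpretation is
monotone with respect to `⊐` in each argument position. -/
def Alg.ProbMonotone {F X : Type*} {ar : F → ℕ} (A : Alg F ar X)
    (SQ : X → FinDist X → Prop) : Prop :=
  ∀ (f : F) (i : Fin (ar f)) (g : Fin (ar f) → X) (x : X) (d : FinDist X),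
    SQ x d →
      SQ (A.I f (Function.update g i x))
         (d.map fun y => A.I f (Function.update g i y))

/-- Collapsibility of a relation `⊐` between elements and finite distributions. -/
def Collapsible {X : Type*} (SQ : X → FinDist X → Prop) : Prop :=
  ∃ (G : X → ℝ≥0) (ε : ℝ≥0), 0 < ε ∧
    ∀ x d, SQ x d → G x ≥ ε + FinDist.exp G d

/-- `s ⊐_𝒜 d`: for every assignment `α`, `⟦s⟧_α ⊐ overline(⟦d⟧_α)`. -/
def Alg.Orient {F V X : Type*} {ar : F → ℕ} (A : Alg F ar X)
    (SQ : X → FinDist X → Prop) (s : Tm F ar V) (d : FinDist (Tm F ar V)) : Prop :=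
  ∀ α : V → X, SQ (A.interp α s) (d.map (A.interp α))

/-- A probabilistic term rewrite system: a set of rules `l → d`. -/
abbrev PTRS (F : Type*) (ar : F → ℕ) (V : Type*) :=
  Tm F ar V → FinDist (Tm F ar V) → Prop

/-- The PARS `R̂` induced by a PTRS `R`: closure of the rules under
contexts and substitutions. -/
def PTRS.hat {F V : Type*} {ar : F → ℕ} (R : PTRS F ar V) : PARS (Tm F ar V) :=
  fun s e =>
    ∃ (l : Tm F ar V) (d : FinDist (Tm F ar V)) (C : Ctx F ar V) (σ : V → Tm F ar V),
      R l d ∧ C.IsCtx ∧ s = C.plug (l.subst σ) ∧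
      e = d.map (fun t => C.plug (t.subst σ))

/-- A PTRS is SAST if its induced PARS is. -/
def PTRS.SAST {F V : Type*} {ar : F → ℕ} (R : PTRS F ar V) : Prop :=
  R.hat.SAST

section Aux

open Finset

variable {A₀ : Type*}

@[simp] lemma MD.wt_zero : (0 : MD A₀).wt = 0 := rfl

@[simp] lemma MD.wt_add (μ ν : MD A₀) : (μ + ν).wt = μ.wt + ν.wt := by
  simp [MD.wt]

@[simp] lemma MD.wt_smul (p : ℝ≥0) (μ : MD A₀) : (MD.smul p μ).wt = p * μ.wt := by
  simp only [MD.wt, MD.smul, Multiset.map_map, Function.comp]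
  exact Multiset.sum_map_mul_left

@[simp] lemma MD.exp_zero (f : A₀ → ℝ≥0) : MD.exp f (0 : MD A₀) = 0 := rfl

@[simp] lemma MD.exp_add (f : A₀ → ℝ≥0) (μ ν : MD A₀) :
    MD.exp f (μ + ν) = MD.exp f μ + MD.exp f ν := by
  simp [MD.exp]

@[simp] lemma MD.exp_smul (f : A₀ → ℝ≥0) (p : ℝ≥0) (μ : MD A₀) :
    MD.exp f (MD.smul p μ) = p * MD.exp f μ := by
  simp only [MD.exp, MD.smul, Multiset.map_map, Function.comp, mul_assoc]
  exact Multiset.sum_map_mul_left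

@[simp] lemma MD.exp_single (f : A₀ → ℝ≥0) (p : ℝ≥0) (a : A₀) :
    MD.exp f ({(p, a)} : MD A₀) = p * f a := by
  simp [MD.exp]

@[simp] lemma MD.wt_single (p : ℝ≥0) (a : A₀) : ({(p, a)} : MD A₀).wt = p := by
  simp [MD.wt]

lemma MD.wt_sum {ι : Type*} (s : Finset ι) (g : ι → MD A₀) :
    (∑ i ∈ s, g i).wt = ∑ i ∈ s, (g i).wt := by
  classical
  induction s using Finset.induction with
  | empty => simp
  | insert _ _ h ih => simp [Finset.sum_insert h, ih]

lemma MD.exp_sum {ι : Type*} (f : A₀ → ℝ≥0) (s : Finset ι) (g : ι → MD A₀) :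
    MD.exp f (∑ i ∈ s, g i) = ∑ i ∈ s, MD.exp f (g i) := by
  classical
  induction s using Finset.induction with
  | empty => simp
  | insert _ _ h ih => simp [Finset.sum_insert h, ih]

lemma FinDist.wt_toMD (d : FinDist A₀) : d.toMD.wt = 1 := by
  simpa [MD.wt, FinDist.toMD, Multiset.map_map, Function.comp,
    Finsupp.sum] using d.sum_one

lemma FinDist.exp_toMD (f : A₀ → ℝ≥0) (d : FinDist A₀) :
    MD.exp f d.toMD = FinDist.exp f d := by
  simp [MD.exp, FinDist.toMD, FinDist.exp, Multiset.map_map, Function.comp, Finsupp.sum]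

lemma FinDist.exp_map {B : Type*} (h : A₀ → B) (d : FinDist A₀) (f : B → ℝ≥0) :
    FinDist.exp f (d.map h) = FinDist.exp (fun a => f (h a)) d := by
  classical
  simp only [FinDist.exp, FinDist.map]
  exact Finsupp.sum_mapDomain_index (by simp) (fun b p q => add_mul p q (f b))

/-- Drift of the expected rank along a single probabilistic reduction step. -/
lemma PARS.step_drift (P : PARS A₀) (ε : ℝ≥0) (G : A₀ → ℝ≥0)
    (hG : P.Ranking ε G) {μ ν : MD A₀} (h : P.Step μ ν) :
    ε * ν.wt + MD.exp G ν ≤ MD.exp G μ := by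
  induction h with
  | term a ha => simp
  | rule a d hd =>
      rw [FinDist.wt_toMD, FinDist.exp_toMD, MD.exp_single, mul_one, one_mul]
      exact hG a d hd
  | conv n p μs ρs hp hstep ih =>
      rw [MD.wt_sum, MD.exp_sum, MD.exp_sum]
      simp only [MD.wt_smul, MD.exp_smul]
      rw [Finset.mul_sum, ← Finset.sum_add_distrib]
      refine Finset.sum_le_sum fun i _ => ?_
      calc ε * (p i * (ρs i).wt) + p i * MD.exp G (ρs i)
          = p i * (ε * (ρs i).wt + MD.exp G (ρs i)) := by ring
        _ ≤ p i * MD.exp G (μs i) := mul_le_mul_right (ih i) _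

variable {F V : Type*} {ar : F → ℕ}

/-- Interpretation of a precontext, as a function of the hole value. -/
def ctxInterp {X : Type*} (A : Alg F ar X) (α : V → X) : Ctx F ar V → X → X
  | .var (.inl x), _ => α x
  | .var (.inr _), v => v
  | .app f ts, v => A.I f fun i => ctxInterp A α (ts i) v

lemma interp_plug {X : Type*} (A : Alg F ar X) (α : V → X) (C : Ctx F ar V)
    (t : Tm F ar V) : A.interp α (C.plug t) = ctxInterp A α C (A.interp α t) := by
  induction C with
  | var x => cases x <;> rfl
  | app f ts ih =>
      show A.I f _ = A.I f _
      exact congrArg _ (funext fun i => ih i)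

lemma subst_interp {X : Type*} (A : Alg F ar X) (α : V → X) (σ : V → Tm F ar V)
    (t : Tm F ar V) :
    A.interp α (t.subst σ) = A.interp (fun v => A.interp α (σ v)) t := by
  induction t with
  | var x => rfl
  | app f ts ih =>
      show A.I f _ = A.I f _
      exact congrArg _ (funext fun i => ih i)

lemma ctxInterp_const {X : Type*} (A : Alg F ar X) (α : V → X) (C : Ctx F ar V)
    (h : C.holes = 0) (v w : X) : ctxInterp A α C v = ctxInterp A α C w := by
  induction C with
  | var x =>
      cases x with
      | inl => rfl
      | inr => simp [Ctx.holes] at h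
  | app f ts ih =>
      have h0 : ∀ i, Ctx.holes (ts i) = 0 := by
        intro i
        have := (Finset.sum_eq_zero_iff.mp h) i (Finset.mem_univ i)
        exact this
      show A.I f _ = A.I f _
      exact congrArg _ (funext fun i => ih i (h0 i))

lemma exists_hole {n : ℕ} (g : Fin n → ℕ) (h : ∑ i, g i = 1) :
    ∃ i, g i = 1 ∧ ∀ j, j ≠ i → g j = 0 := by
  classical
  obtain ⟨i, -, hi⟩ := Finset.exists_ne_zero_of_sum_ne_zero (s := Finset.univ)
    (f := g) (by simp [h])
  refine ⟨i, ?_, ?_⟩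
  · have h2 : g i ≤ ∑ j, g j := Finset.single_le_sum (fun _ _ => Nat.zero_le _)
      (Finset.mem_univ i)
    omega
  · intro j hj
    have hsub : ({i, j} : Finset (Fin n)) ⊆ Finset.univ := Finset.subset_univ _
    have := Finset.sum_le_sum_of_subset (f := g) hsub
    rw [Finset.sum_pair (Ne.symm hj)] at this
    omega

lemma ctxInterp_mono {X : Type*} {gg : X → X → Prop} (A : Alg F ar X)
    (hmono : ∀ (f : F) (i : Fin (ar f)) (g : Fin (ar f) → X) (x y : X), gg x y →
      gg (A.I f (Function.update g i x)) (A.I f (Function.update g i y)))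
    (α : V → X) (C : Ctx F ar V) (hC : C.IsCtx) (x y : X) (h : gg x y) :
    gg (ctxInterp A α C x) (ctxInterp A α C y) := by
  induction C with
  | var v =>
      cases v with
      | inl => simp [Ctx.IsCtx, Ctx.holes] at hC
      | inr => exact h
  | app f ts ih =>
      classical
      obtain ⟨i, hi1, hi0⟩ := exists_hole (fun i => Ctx.holes (ts i)) hC
      have hx : (fun j => ctxInterp A α (ts j) x)
          = Function.update (fun j => ctxInterp A α (ts j) y) i
              (ctxInterp A α (ts i) x) := by
        funext j
        by_cases hji : j = i
        · subst hji; simp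
        · rw [Function.update_of_ne hji]
          exact ctxInterp_const A α (ts j) (hi0 j hji) x y
      have hy : (fun j => ctxInterp A α (ts j) y)
          = Function.update (fun j => ctxInterp A α (ts j) y) i
              (ctxInterp A α (ts i) y) := by
        funext j
        by_cases hji : j = i
        · subst hji; simp
        · rw [Function.update_of_ne hji]
      show gg (A.I f _) (A.I f _)
      rw [hx, hy, Function.update_idem]
      exact hmono f i _ _ _ (ih i hi1)

lemma ctxInterp_affine {m : ℕ} (A : Alg F ar (Fin m → ℝ≥0))
    (hform : ∀ f : F,
      ∃ (C : Fin (ar f) → Matrix (Fin m) (Fin m) ℝ≥0) (c : Fin m → ℝ≥0),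
        ∀ x, A.I f x = (∑ i, (C i).mulVec (x i)) + c)
    (α : V → Fin m → ℝ≥0) (C : Ctx F ar V) (hC : C.IsCtx) :
    ∃ (M : Matrix (Fin m) (Fin m) ℝ≥0) (b : Fin m → ℝ≥0),
      ∀ v, ctxInterp A α C v = M.mulVec v + b := by
  induction C with
  | var x =>
      cases x with
      | inl => simp [Ctx.IsCtx, Ctx.holes] at hC
      | inr =>
          exact ⟨1, 0, fun v => by simp [ctxInterp]⟩
  | app f ts ih =>
      classical
      obtain ⟨i, hi1, hi0⟩ := exists_hole (fun i => Ctx.holes (ts i)) hC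
      obtain ⟨Cs, c, hf⟩ := hform f
      obtain ⟨M, b, hMb⟩ := ih i hi1
      refine ⟨Cs i * M,
        (Cs i).mulVec b
          + ((∑ j ∈ Finset.univ.erase i, (Cs j).mulVec (ctxInterp A α (ts j) 0)) + c),
        fun v => ?_⟩
      have step1 : ctxInterp A α (Tm.app f ts) v
          = (∑ j, (Cs j).mulVec (ctxInterp A α (ts j) v)) + c := hf _
      rw [step1, ← Finset.add_sum_erase Finset.univ _ (Finset.mem_univ i)]
      have hrest : ∀ j ∈ Finset.univ.erase i,
          (Cs j).mulVec (ctxInterp A α (ts j) v)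
            = (Cs j).mulVec (ctxInterp A α (ts j) 0) := by
        intro j hj
        rw [ctxInterp_const A α (ts j) (hi0 j (Finset.mem_erase.mp hj).1) v 0]
      rw [Finset.sum_congr rfl hrest, hMb, Matrix.mulVec_add, Matrix.mulVec_mulVec]
      abel

lemma exp_affine {m : ℕ} (d : FinDist A₀) (u : A₀ → Fin m → ℝ≥0)
    (M : Matrix (Fin m) (Fin m) ℝ≥0) (b : Fin m → ℝ≥0) (j : Fin m) :
    FinDist.exp (fun a => (M.mulVec (u a) + b) j) d
      = (M.mulVec (fun k => FinDist.exp (fun a => u a k) d) + b) j := by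
  classical
  simp only [FinDist.exp, Pi.add_apply, Matrix.mulVec, dotProduct, Finsupp.sum,
    mul_add, Finset.mul_sum, Finset.sum_add_distrib, Finset.sum_mul]
  congr 1
  · rw [Finset.sum_comm]
    refine Finset.sum_congr rfl fun k _ => Finset.sum_congr rfl fun a _ => by ring
  · have := d.sum_one
    rw [Finsupp.sum] at this
    rw [← Finset.sum_mul, this, one_mul]

end Aux

/-- soundness of monotone matrix interpretations over
`(ℝ≥0)^m` for proving SAST of a PTRS. -/
theorem stmt_18 {F V : Type*} [Countable V] [Infinite V] {ar : F → ℕ}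
    (m : ℕ) (hm : 0 < m) (ε : ℝ≥0) (hε : 0 < ε)
    (gg : (Fin m → ℝ≥0) → (Fin m → ℝ≥0) → Prop)
    (hgg : ∀ x y : Fin m → ℝ≥0, gg x y ↔
      (x ⟨0, hm⟩ ≥ ε + y ⟨0, hm⟩ ∧ ∀ i : Fin m, i ≠ ⟨0, hm⟩ → x i ≥ y i))
    (A : Alg F ar (Fin m → ℝ≥0))
    (hform : ∀ f : F,
      ∃ (C : Fin (ar f) → Matrix (Fin m) (Fin m) ℝ≥0) (c : Fin m → ℝ≥0),
        ∀ x : Fin (ar f) → (Fin m → ℝ≥0),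
          A.I f x = (∑ i, (C i).mulVec (x i)) + c)
    (hmono : ∀ (f : F) (i : Fin (ar f)) (g : Fin (ar f) → Fin m → ℝ≥0)
      (x y : Fin m → ℝ≥0), gg x y →
        gg (A.I f (Function.update g i x)) (A.I f (Function.update g i y)))
    (R : PTRS F ar V)
    (hR : ∀ l d, R l d → ∀ α : V → (Fin m → ℝ≥0),
      gg (A.interp α l) (fun j => FinDist.exp (fun t => A.interp α t j) d)) :
    R.SAST := by
  classical
  set z : Fin m := ⟨0, hm⟩ with hz
  set α₀ : V → Fin m → ℝ≥0 := fun _ _ => 0 with hα₀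
  set G : Tm F ar V → ℝ≥0 := fun t => A.interp α₀ t z with hGdef
  have hrank : R.hat.Ranking ε G := by
    intro s e hse
    obtain ⟨l, d, C, σ, hld, hCtx, hs, he⟩ := hse
    set β : V → Fin m → ℝ≥0 := fun v => A.interp α₀ (σ v) with hβ
    set e0 : Fin m → ℝ≥0 := fun j => FinDist.exp (fun t => A.interp β t j) d with he0
    have hor : gg (A.interp β l) e0 := hR l d hld β
    obtain ⟨M, b, hMb⟩ := ctxInterp_affine A hform α₀ C hCtx
    have hmono' := ctxInterp_mono A hmono α₀ C hCtx _ _ hor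
    have hmono'' := ((hgg _ _).mp hmono').1
    have hGs : G s = ctxInterp A α₀ C (A.interp β l) z := by
      rw [hs, hGdef]
      simp only
      rw [interp_plug, subst_interp]
    have key : ctxInterp A α₀ C e0 z = FinDist.exp G e := by
      rw [he, FinDist.exp_map]
      have hterm : ∀ t, G (C.plug (t.subst σ))
          = (M.mulVec (A.interp β t) + b) z := by
        intro t
        rw [hGdef]
        simp only
        rw [interp_plug, subst_interp, hMb]
      calc ctxInterp A α₀ C e0 z = (M.mulVec e0 + b) z := by rw [hMb]
        _ = FinDist.exp (fun t => (M.mulVec (A.interp β t) + b) z) d := by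
            rw [exp_affine d (fun t => A.interp β t) M b z]
        _ = FinDist.exp (fun t => G (C.plug (t.subst σ))) d := by
            exact congrArg (fun f => FinDist.exp f d) (funext fun t => (hterm t).symm)
    rw [hGs, ← key]
    exact hmono''
  intro a
  have hbound : ∀ μs, R.hat.RedSeqFrom {(1,a)} μs →
      adl μs ≤ ((G a / ε : ℝ≥0) : ℝ≥0∞) := by
    rintro μs ⟨h0, hseq⟩
    have h00 : MD.exp G (μs 0) = G a := by rw [h0, MD.exp_single, one_mul]
    have hpart : ∀ N, ε * (∑ n ∈ Finset.range N, (μs (n+1)).wt) ≤ G a := by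
      have key : ∀ N, ε * (∑ n ∈ Finset.range N, (μs (n+1)).wt)
          + MD.exp G (μs N) ≤ MD.exp G (μs 0) := by
        intro N
        induction N with
        | zero => simp
        | succ N ihN =>
            have hd := PARS.step_drift R.hat ε G hrank (hseq N)
            rw [Finset.sum_range_succ, mul_add, add_assoc]
            calc ε * (∑ n ∈ Finset.range N, (μs (n+1)).wt)
                  + (ε * (μs (N+1)).wt + MD.exp G (μs (N+1)))
                ≤ ε * (∑ n ∈ Finset.range N, (μs (n+1)).wt) + MD.exp G (μs N) :=
                  add_le_add le_rfl hd
              _ ≤ MD.exp G (μs 0) := ihN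
      intro N
      calc ε * (∑ n ∈ Finset.range N, (μs (n+1)).wt)
          ≤ ε * (∑ n ∈ Finset.range N, (μs (n+1)).wt) + MD.exp G (μs N) :=
            le_add_right le_rfl
        _ ≤ MD.exp G (μs 0) := key N
        _ = G a := h00
    rw [adl, ENNReal.tsum_eq_iSup_sum]
    refine iSup_le fun s => ?_
    obtain ⟨N, hN⟩ := s.exists_nat_subset_range
    calc (∑ n ∈ s, ((μs (n+1)).wt : ℝ≥0∞))
        ≤ ∑ n ∈ Finset.range N, ((μs (n+1)).wt : ℝ≥0∞) :=
          Finset.sum_le_sum_of_subset hN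
      _ = (((∑ n ∈ Finset.range N, (μs (n+1)).wt : ℝ≥0)) : ℝ≥0∞) := by
          rw [ENNReal.coe_finset_sum]
      _ ≤ ((G a / ε : ℝ≥0) : ℝ≥0∞) := by
          refine ENNReal.coe_le_coe.mpr ?_
          rw [le_div_iff₀ hε]
          rw [mul_comm]
          exact hpart N
  have : adh R.hat a ≤ ((G a / ε : ℝ≥0) : ℝ≥0∞) :=
    iSup_le fun μs => iSup_le fun hμs => hbound μs hμs
  exact lt_of_le_of_lt this ENNReal.coe_lt_top
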